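/- Let E_1, E_2, ... be i.i.d. unit exponential random variables, γ > 0, f : ℕ → ℝ increasing with f(0) = 0, and Δf(j) = f(j) - f(j-1). Define W_k(f) = Σ_{j=1}^{k} Δf(j) ( exp(-γ Σ_{h=j}^{k} E_h/h) - E[exp(-γ Σ_{h=j}^{k} E_h/h)] ) and γ(k) = (1 + γ/k)^{-1}. Then with respect to the filtration F_k = σ(E_1,...,E_k), the conditional expectation satisfies E(W_{k+1}(f) | F_k) = γ(k+1) W_k(f). -/

import Mathlib

open MeasureTheory ProbabilityTheory Real Finset

/-! Splitting off the last summand `E_{k+1}/(k+1)` of each inner sum factors `W_{k+1}` as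
`X Y - 𝔼[X Y]`, where `X = ∑_{j ≤ k+1} Δf(j) exp(-γ ∑_{h=j}^{k} E_h/h)` is `F_k`-measurable and
`Y = exp(-γ E_{k+1}/(k+1))` is independent of `F_k`. Hence `𝔼[W_{k+1} | F_k] = 𝔼[Y] (X - 𝔼[X])`,
and `X - 𝔼[X] = W_k` because the summand `j = k+1` of `X` is the constant `Δf(k+1)`. Finally
`𝔼[Y] = (1 + γ/(k+1))⁻¹` is the Laplace transform of the unit exponential law. -/

section Exponential

variable {Ω : Type*} [MeasurableSpace Ω] {μ : Measure Ω} {X : Ω → ℝ} {r t : ℝ}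

lemma expMeasure_Iio_zero (r : ℝ) : expMeasure r (Set.Iio 0) = 0 := by
  rw [expMeasure, gammaMeasure, withDensity_apply _ measurableSet_Iio]
  exact lintegral_gammaPDF_of_nonpos le_rfl

lemma ae_nonneg_of_map_eq_expMeasure (hX : Measurable X) (h : μ.map X = expMeasure r) :
    ∀ᵐ ω ∂μ, 0 ≤ X ω := by
  simp only [ae_iff, not_le]
  change μ (X ⁻¹' Set.Iio 0) = 0
  rw [← Measure.map_apply hX measurableSet_Iio, h]
  exact expMeasure_Iio_zero r

lemma integral_exp_neg_mul_expMeasure (hr : 0 < r) (hrt : 0 < r + t) :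
    ∫ x, exp (-(t * x)) ∂expMeasure r = r / (r + t) := by
  have hdens : ∀ x, (gammaPDF 1 r x).toReal • exp (-(t * x))
      = Set.indicator (Set.Ici 0) (fun x => r * exp (-(r + t) * x)) x := by
    intro x
    rw [gammaPDF, ENNReal.toReal_ofReal (gammaPDFReal_nonneg one_pos hr x), smul_eq_mul]
    by_cases hx : 0 ≤ x
    · simp only [gammaPDFReal, if_pos hx, Set.indicator_of_mem (Set.mem_Ici.2 hx),
        Gamma_one, rpow_one, sub_self, rpow_zero]
      rw [mul_assoc, ← exp_add]
      ring_nf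
    · simp [gammaPDFReal, hx]
  rw [expMeasure, gammaMeasure, integral_withDensity_eq_integral_toReal_smul (f := gammaPDF 1 r)
    (measurable_gammaPDFReal 1 r).ennreal_ofReal (ae_of_all _ fun _ => ENNReal.ofReal_lt_top)]
  simp_rw [hdens]
  rw [integral_indicator measurableSet_Ici, integral_Ici_eq_integral_Ioi, integral_const_mul,
    integral_exp_mul_Ioi (by linarith) 0]
  field_simp
  simp

lemma integral_exp_neg_mul_of_map_eq_expMeasure (hX : Measurable X)
    (h : μ.map X = expMeasure r) (hr : 0 < r) (hrt : 0 < r + t) :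
    ∫ ω, exp (-(t * X ω)) ∂μ = r / (r + t) := by
  rw [← integral_exp_neg_mul_expMeasure hr hrt, ← h,
    integral_map hX.aemeasurable (by fun_prop : Continuous fun x => exp (-(t * x))).aestronglyMeasurable]

end Exponential

section IndependentFactor

variable {Ω : Type*} {m m' m0 : MeasurableSpace Ω} {μ : Measure Ω} [IsFiniteMeasure μ]
  {X Y : Ω → ℝ}

lemma condExp_mul_eq_mul_integral_of_indep (hm : m ≤ m0) (hm' : m' ≤ m0)
    (hX : StronglyMeasurable[m] X) (hY : StronglyMeasurable[m'] Y) (hindep : Indep m' m μ)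
    (hXY : Integrable (X * Y) μ) (hYint : Integrable Y μ) :
    μ[X * Y | m] =ᵐ[μ] fun ω => X ω * ∫ ω', Y ω' ∂μ :=
  (condExp_mul_of_stronglyMeasurable_left hX hXY hYint).trans
    (Filter.EventuallyEq.rfl.mul (condExp_indep_eq hm' hm hY hindep))

lemma integral_mul_eq_mul_integral_of_indep (hm : m ≤ m0) (hm' : m' ≤ m0)
    (hX : StronglyMeasurable[m] X) (hY : StronglyMeasurable[m'] Y) (hindep : Indep m' m μ)
    (hXY : Integrable (X * Y) μ) (hYint : Integrable Y μ) :
    ∫ ω, X ω * Y ω ∂μ = (∫ ω, X ω ∂μ) * ∫ ω, Y ω ∂μ := by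
  rw [← integral_mul_const]
  exact (integral_condExp hm).symm.trans
    (integral_congr_ae (condExp_mul_eq_mul_integral_of_indep hm hm' hX hY hindep hXY hYint))

lemma condExp_mul_sub_integral_of_indep (hm : m ≤ m0) (hm' : m' ≤ m0)
    (hX : StronglyMeasurable[m] X) (hY : StronglyMeasurable[m'] Y) (hindep : Indep m' m μ)
    (hXY : Integrable (X * Y) μ) (hYint : Integrable Y μ) :
    μ[fun ω => X ω * Y ω - ∫ ω', X ω' * Y ω' ∂μ | m]
      =ᵐ[μ] fun ω => (∫ ω', Y ω' ∂μ) * (X ω - ∫ ω', X ω' ∂μ) := by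
  filter_upwards [condExp_sub hXY (integrable_const (∫ ω', X ω' * Y ω' ∂μ)) m,
    condExp_mul_eq_mul_integral_of_indep hm hm' hX hY hindep hXY hYint] with ω hsub hmul
  rw [show (fun ω => X ω * Y ω - ∫ ω', X ω' * Y ω' ∂μ) = X * Y - fun _ => ∫ ω', X ω' * Y ω' ∂μ
    from rfl, hsub, Pi.sub_apply, hmul, condExp_const hm,
    integral_mul_eq_mul_integral_of_indep hm hm' hX hY hindep hXY hYint]
  ring

end IndependentFactor

lemma sum_mul_sub_integral {Ω ι : Type*} [MeasurableSpace Ω] {μ : Measure Ω} (s : Finset ι)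
    (c : ι → ℝ) {g : ι → Ω → ℝ} (hg : ∀ i ∈ s, Integrable (g i) μ) (ω : Ω) :
    ∑ i ∈ s, c i * (g i ω - ∫ ω', g i ω' ∂μ)
      = ∑ i ∈ s, c i * g i ω - ∫ ω', ∑ i ∈ s, c i * g i ω' ∂μ := by
  rw [integral_finsetSum s fun i hi => (hg i hi).const_mul (c i)]
  simp only [integral_const_mul, mul_sub, sum_sub_distrib]

section TailExp

variable {Ω : Type*} (γ : ℝ) (E : ℕ → Ω → ℝ)

noncomputable def tailExp (j k : ℕ) (ω : Ω) : ℝ := exp (-γ * ∑ h ∈ Icc j k, E h ω / h)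

variable {γ E} {j k : ℕ}

lemma tailExp_of_lt (hkj : k < j) (ω : Ω) : tailExp γ E j k ω = 1 := by
  simp [tailExp, Icc_eq_empty_of_lt hkj]

lemma tailExp_self (k : ℕ) (ω : Ω) : tailExp γ E k k ω = exp (-(γ / k * E k ω)) := by
  rw [tailExp, Icc_self, sum_singleton]
  ring_nf

lemma tailExp_succ (hj : j ≤ k + 1) (ω : Ω) :
    tailExp γ E j (k + 1) ω = tailExp γ E j k ω * tailExp γ E (k + 1) (k + 1) ω := by
  simp only [tailExp, sum_Icc_succ_top hj, Icc_self, sum_singleton, mul_add, exp_add]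

lemma sum_mul_tailExp_mul_tailExp_succ (c : ℕ → ℝ) (k : ℕ) (ω : Ω) :
    (∑ j ∈ Icc 1 (k + 1), c j * tailExp γ E j k ω) * tailExp γ E (k + 1) (k + 1) ω
      = ∑ j ∈ Icc 1 (k + 1), c j * tailExp γ E j (k + 1) ω := by
  rw [sum_mul]
  exact sum_congr rfl fun j hj => by rw [tailExp_succ (mem_Icc.1 hj).2, mul_assoc]

lemma tailExp_le_one (hγ : 0 ≤ γ) {ω : Ω} (hE : ∀ h, 0 ≤ E h ω) : tailExp γ E j k ω ≤ 1 := by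
  have : 0 ≤ ∑ h ∈ Icc j k, E h ω / h := sum_nonneg fun h _ => div_nonneg (hE h) h.cast_nonneg
  exact exp_le_one_iff.2 (by nlinarith)

lemma stronglyMeasurable_tailExp {m : MeasurableSpace Ω}
    (hE : ∀ h ∈ Icc j k, StronglyMeasurable[m] (E h)) : StronglyMeasurable[m] (tailExp γ E j k) :=
  continuous_exp.comp_stronglyMeasurable
    ((stronglyMeasurable_fun_sum _ fun h hh => by
      simpa only [div_eq_mul_inv] using (hE h hh).mul_const _).const_mul _)

lemma stronglyMeasurable_tailExp_of_stronglyAdapted [MeasurableSpace Ω] {ℱ : Filtration ℕ ‹_›}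
    (hE : StronglyAdapted ℱ E) : StronglyMeasurable[ℱ k] (tailExp γ E j k) :=
  stronglyMeasurable_tailExp fun h hh => (hE h).mono (ℱ.mono (mem_Icc.1 hh).2)

lemma stronglyMeasurable_comap_tailExp_self [MeasurableSpace Ω] (k : ℕ) :
    StronglyMeasurable[MeasurableSpace.comap (E k) inferInstance] (tailExp γ E k k) :=
  stronglyMeasurable_tailExp fun h hh => by
    rw [Icc_self, mem_singleton] at hh
    exact hh ▸ (comap_measurable _).stronglyMeasurable

lemma integrable_tailExp [MeasurableSpace Ω] {μ : Measure Ω} [IsFiniteMeasure μ] (hγ : 0 ≤ γ)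
    (hsm : ∀ h, StronglyMeasurable (E h)) (hE0 : ∀ h, ∀ᵐ ω ∂μ, 0 ≤ E h ω) :
    Integrable (tailExp γ E j k) μ := by
  refine .of_bound (stronglyMeasurable_tailExp fun h _ => hsm h).aestronglyMeasurable 1 ?_
  filter_upwards [ae_all_iff.2 hE0] with ω hω
  exact (norm_of_nonneg (exp_pos _).le).trans_le (tailExp_le_one hγ hω)

lemma integral_tailExp_self [MeasurableSpace Ω] {μ : Measure Ω} (hγ : 0 ≤ γ)
    (hE : Measurable (E k)) (hexp : μ.map (E k) = expMeasure 1) :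
    ∫ ω, tailExp γ E k k ω ∂μ = (1 + γ / k)⁻¹ := by
  simp only [tailExp_self]
  rw [integral_exp_neg_mul_of_map_eq_expMeasure hE hexp one_pos (by positivity), one_div]

end TailExp

theorem condexp_W_succ_general
    {Ω : Type*} [m0 : MeasurableSpace Ω] {μ : Measure Ω} [IsProbabilityMeasure μ]
    (E : ℕ → Ω → ℝ) (hsm : ∀ i, StronglyMeasurable (E i))
    (hindep : iIndepFun E μ)
    (hexp : ∀ i, μ.map (E i) = expMeasure 1)
    (γ : ℝ) (hγ : 0 < γ)
    (f : ℕ → ℝ)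
    (W : ℕ → Ω → ℝ)
    (hW : ∀ k ω, W k ω = ∑ j ∈ Finset.Icc 1 k, (f j - f (j - 1)) *
        (Real.exp (-γ * ∑ h ∈ Finset.Icc j k, E h ω / h)
          - ∫ ω', Real.exp (-γ * ∑ h ∈ Finset.Icc j k, E h ω' / h) ∂μ))
    (k : ℕ) :
    μ[W (k + 1) | (MeasureTheory.Filtration.natural E hsm) k]
      =ᵐ[μ] fun ω => (1 + γ / (k + 1))⁻¹ * W k ω := by
  have hint : ∀ j k, Integrable (tailExp γ E j k) μ := fun j k => integrable_tailExp hγ.le hsm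
    fun i => ae_nonneg_of_map_eq_expMeasure (hsm i).measurable (hexp i)
  set X := fun ω => ∑ j ∈ Icc 1 (k + 1), (f j - f (j - 1)) * tailExp γ E j k ω
  set Y := tailExp γ E (k + 1) (k + 1)
  have hXY : X * Y = fun ω => ∑ j ∈ Icc 1 (k + 1), (f j - f (j - 1)) * tailExp γ E j (k + 1) ω :=
    funext fun ω => sum_mul_tailExp_mul_tailExp_succ _ k ω
  have hWsucc : W (k + 1) = fun ω => X ω * Y ω - ∫ ω', X ω' * Y ω' ∂μ := by
    ext ω
    simp only [hW, ← Pi.mul_apply X Y, hXY]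
    exact sum_mul_sub_integral _ _ (fun j _ => hint j (k + 1)) ω
  have hWk : W k = fun ω => X ω - ∫ ω', X ω' ∂μ := by
    ext ω
    rw [hW, ← sum_mul_sub_integral _ _ (fun j _ => hint j k) ω, sum_Icc_succ_top (by omega)]
    simp only [tailExp_of_lt (lt_add_one k), integral_const, probReal_univ, one_smul, sub_self,
      mul_zero, add_zero]
    rfl
  rw [hWsucc]
  refine (condExp_mul_sub_integral_of_indep (Filtration.le _ k) (hsm _).measurable.comap_le
    (stronglyMeasurable_fun_sum _ fun j _ =>
      (stronglyMeasurable_tailExp_of_stronglyAdapted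
        (Filtration.stronglyAdapted_natural hsm)).const_mul _)
    (stronglyMeasurable_comap_tailExp_self _) (hindep.indep_comap_natural_of_lt hsm (lt_add_one k))
    ?_ (hint _ _)).trans ?_
  · rw [hXY]
    exact integrable_finsetSum _ fun j _ => (hint j (k + 1)).const_mul _
  · simp only [hWk, integral_tailExp_self hγ.le (hsm _).measurable (hexp _)]
    push_cast
    rfl

theorem condexp_W_succ
    {Ω : Type*} [m0 : MeasurableSpace Ω] {μ : Measure Ω} [IsProbabilityMeasure μ]
    (E : ℕ → Ω → ℝ) (hsm : ∀ i, StronglyMeasurable (E i))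
    (hindep : iIndepFun E μ)
    (hexp : ∀ i, μ.map (E i) = expMeasure 1)
    (γ : ℝ) (hγ : 0 < γ)
    (f : ℕ → ℝ) (hf : Monotone f) (hf0 : f 0 = 0)
    (W : ℕ → Ω → ℝ)
    (hW : ∀ k ω, W k ω = ∑ j ∈ Finset.Icc 1 k, (f j - f (j - 1)) *
        (Real.exp (-γ * ∑ h ∈ Finset.Icc j k, E h ω / h)
          - ∫ ω', Real.exp (-γ * ∑ h ∈ Finset.Icc j k, E h ω' / h) ∂μ))
    (k : ℕ) (hk : 1 ≤ k) :
    μ[W (k + 1) | (MeasureTheory.Filtration.natural E hsm) k]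
      =ᵐ[μ] fun ω => (1 + γ / (k + 1))⁻¹ * W k ω :=
  condexp_W_succ_general (m0 := m0) E hsm hindep hexp γ hγ f W hW k
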